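/- arXiv:1902.04455 — 3 statements merged into one kernel-verified Lean document; each statement's English description precedes it below -/
import Mathlib

section
/- Define Θ: ℝ⁵ → ℝ by Θ(u₁,u₂,u₃,u₄,u₅) = u₁u₂(u₄²+u₅²−u₃²) + u₄u₅(u₁²+u₂²−u₃²). Then for any point ω'' = (t_{n-2}, x_{n-2}, t_{n-1}, x_{n-1}, t_n) with all coordinates positive satisfying the strict triangle inequality t_{n-1} < x_{n-2} + t_{n-2}, the partial derivatives ∂Θ/∂u₄(ω'') = 2x_{n-1}t_{n-2}x_{n-2} + t_n(x_{n-2}² + t_{n-2}² − t_{n-1}²) and ∂Θ/∂u₅(ω'') = 2t_n t_{n-2}x_{n-2} + x_{n-1}(x_{n-2}² + t_{n-2}² − t_{n-1}²) do not both vanish. -/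
/-! The two partials are affine in (u₄, u₅) with the roles of u₄ and u₅ swapped, so their sum
factors as (x₁ + tₙ)((x₂ + t₂)² − t₁²), which the triangle inequality makes positive. -/

namespace Theta

def theta (u₁ u₂ u₃ u₄ u₅ : ℝ) : ℝ :=
  u₁ * u₂ * (u₄ ^ 2 + u₅ ^ 2 - u₃ ^ 2) + u₄ * u₅ * (u₁ ^ 2 + u₂ ^ 2 - u₃ ^ 2)

theorem theta_swap (u₁ u₂ u₃ u₄ u₅ : ℝ) : theta u₁ u₂ u₃ u₄ u₅ = theta u₁ u₂ u₃ u₅ u₄ := by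
  unfold theta; ring

theorem hasDerivAt_quadratic (a b c x : ℝ) :
    HasDerivAt (fun u => a * u ^ 2 + b * u + c) (2 * a * x + b) x := by
  have h := (((hasDerivAt_pow 2 x).const_mul a).add ((hasDerivAt_id x).const_mul b)).add_const c
  exact h.congr_deriv (by norm_num; ring)

theorem hasDerivAt_theta_fourth (u₁ u₂ u₃ u₅ x : ℝ) :
    HasDerivAt (fun u => theta u₁ u₂ u₃ u u₅)
      (2 * x * u₁ * u₂ + u₅ * (u₂ ^ 2 + u₁ ^ 2 - u₃ ^ 2)) x := by
  have h := hasDerivAt_quadratic (u₁ * u₂) (u₅ * (u₂ ^ 2 + u₁ ^ 2 - u₃ ^ 2))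
    (u₁ * u₂ * (u₅ ^ 2 - u₃ ^ 2)) x
  convert h using 1
  · funext u; unfold theta; ring
  · ring

theorem partials_sum_pos {a b c p q : ℝ} (hc : 0 ≤ c) (htri : c < a + b) (hpq : 0 < p + q) :
    0 < (2 * p * a * b + q * (b ^ 2 + a ^ 2 - c ^ 2)) +
      (2 * q * a * b + p * (b ^ 2 + a ^ 2 - c ^ 2)) := by
  have hfactor : (2 * p * a * b + q * (b ^ 2 + a ^ 2 - c ^ 2)) +
      (2 * q * a * b + p * (b ^ 2 + a ^ 2 - c ^ 2)) = (p + q) * ((a + b) ^ 2 - c ^ 2) := by ring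
  have hsq : c ^ 2 < (a + b) ^ 2 := pow_lt_pow_left₀ htri hc two_ne_zero
  rw [hfactor]
  exact mul_pos hpq (sub_pos.mpr hsq)

end Theta

open Theta

theorem theta_partials_not_both_zero_general
    (Θ : ℝ → ℝ → ℝ → ℝ → ℝ → ℝ)
    (hΘ : ∀ u₁ u₂ u₃ u₄ u₅, Θ u₁ u₂ u₃ u₄ u₅ =
      u₁ * u₂ * (u₄ ^ 2 + u₅ ^ 2 - u₃ ^ 2) + u₄ * u₅ * (u₁ ^ 2 + u₂ ^ 2 - u₃ ^ 2))
    (t₂ x₂ t₁ x₁ tₙ : ℝ)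
    (ht₁ : 0 < t₁) (hx₁ : 0 < x₁) (htₙ : 0 < tₙ)
    (htri : t₁ < x₂ + t₂) :
    deriv (fun u => Θ t₂ x₂ t₁ u tₙ) x₁
        = 2 * x₁ * t₂ * x₂ + tₙ * (x₂ ^ 2 + t₂ ^ 2 - t₁ ^ 2) ∧
    deriv (fun u => Θ t₂ x₂ t₁ x₁ u) tₙ
        = 2 * tₙ * t₂ * x₂ + x₁ * (x₂ ^ 2 + t₂ ^ 2 - t₁ ^ 2) ∧
    ¬ (2 * x₁ * t₂ * x₂ + tₙ * (x₂ ^ 2 + t₂ ^ 2 - t₁ ^ 2) = 0 ∧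
       2 * tₙ * t₂ * x₂ + x₁ * (x₂ ^ 2 + t₂ ^ 2 - t₁ ^ 2) = 0) := by
  obtain rfl : Θ = theta := by funext u₁ u₂ u₃ u₄ u₅; exact hΘ u₁ u₂ u₃ u₄ u₅
  refine ⟨(hasDerivAt_theta_fourth t₂ x₂ t₁ tₙ x₁).deriv, ?_, ?_⟩
  · simp only [theta_swap t₂ x₂ t₁ x₁]
    exact (hasDerivAt_theta_fourth t₂ x₂ t₁ x₁ tₙ).deriv
  · rintro ⟨h₄, h₅⟩
    have hpos := partials_sum_pos ht₁.le (add_comm x₂ t₂ ▸ htri) (add_pos hx₁ htₙ)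
    rw [h₄, h₅, add_zero] at hpos
    exact lt_irrefl 0 hpos

/-- For Θ(u₁,…,u₅) = u₁u₂(u₄²+u₅²−u₃²) + u₄u₅(u₁²+u₂²−u₃²), at a point
(t₂, x₂, t₁, x₁, tₙ) with positive coordinates satisfying t₁ < x₂ + t₂,
the partial derivatives in the fourth and fifth variables are as computed
and do not both vanish. -/
theorem theta_partials_not_both_zero
    (Θ : ℝ → ℝ → ℝ → ℝ → ℝ → ℝ)
    (hΘ : ∀ u₁ u₂ u₃ u₄ u₅, Θ u₁ u₂ u₃ u₄ u₅ =
      u₁ * u₂ * (u₄ ^ 2 + u₅ ^ 2 - u₃ ^ 2) + u₄ * u₅ * (u₁ ^ 2 + u₂ ^ 2 - u₃ ^ 2))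
    (t₂ x₂ t₁ x₁ tₙ : ℝ)
    (ht₂ : 0 < t₂) (hx₂ : 0 < x₂) (ht₁ : 0 < t₁) (hx₁ : 0 < x₁) (htₙ : 0 < tₙ)
    (htri : t₁ < x₂ + t₂) :
    deriv (fun u => Θ t₂ x₂ t₁ u tₙ) x₁
        = 2 * x₁ * t₂ * x₂ + tₙ * (x₂ ^ 2 + t₂ ^ 2 - t₁ ^ 2) ∧
    deriv (fun u => Θ t₂ x₂ t₁ x₁ u) tₙ
        = 2 * tₙ * t₂ * x₂ + x₁ * (x₂ ^ 2 + t₂ ^ 2 - t₁ ^ 2) ∧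
    ¬ (2 * x₁ * t₂ * x₂ + tₙ * (x₂ ^ 2 + t₂ ^ 2 - t₁ ^ 2) = 0 ∧
       2 * tₙ * t₂ * x₂ + x₁ * (x₂ ^ 2 + t₂ ^ 2 - t₁ ^ 2) = 0) :=
  theta_partials_not_both_zero_general Θ hΘ t₂ x₂ t₁ x₁ tₙ ht₁ hx₁ htₙ htri
end

section
/- On the open set Ω₃ of nondegenerate triangles with sides (x,y,z), the map Ψ(x,y,z) = (x+y+z, Φ(x,y,z)), where Φ is the squared Heron area, has differential of rank 2 at every point with not all of x, y, z equal. Equivalently, the three partial derivatives of Φ are all equal at a point of Ω₃ only if x = y = z. -/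
/-!
Expanding Heron's product, `16 Φ = 2 x²(y² + z²) - x⁴ - (y² - z²)²`, so `∂Φ/∂x = x (y² + z² - x²) / 4`
and the other partials follow by symmetry. The difference of two partials factors as
`∂Φ/∂x - ∂Φ/∂y = (y - x)(x + y + z)(x + y - z) / 4`, and on a nondegenerate triangle the last
two factors are positive.
-/

noncomputable def heronSq (x y z : ℝ) : ℝ :=
  (x + y + z) * (-x + y + z) * (x - y + z) * (x + y - z) / 16

lemma heronSq_swap_fst_snd (x y z : ℝ) : heronSq x y z = heronSq y x z := by
  unfold heronSq; ring

lemma heronSq_swap_fst_thd (x y z : ℝ) : heronSq x y z = heronSq z y x := by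
  unfold heronSq; ring

lemma hasDerivAt_heronSq_fst (x y z : ℝ) :
    HasDerivAt (fun t => heronSq t y z) (x * (y ^ 2 + z ^ 2 - x ^ 2) / 4) x := by
  have hpoly : (fun t => heronSq t y z) =
      fun t => (2 * (y ^ 2 + z ^ 2) * t ^ 2 - t ^ 4 - (y ^ 2 - z ^ 2) ^ 2) / 16 := by
    funext t; unfold heronSq; ring
  rw [hpoly]
  have hnum : HasDerivAt (fun t => 2 * (y ^ 2 + z ^ 2) * t ^ 2 - t ^ 4)
      (4 * x * (y ^ 2 + z ^ 2 - x ^ 2)) x :=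
    ((hasDerivAt_pow 2 x).const_mul _).fun_sub (hasDerivAt_pow 4 x) |>.congr_deriv (by ring)
  exact (hnum.sub_const _).div_const 16 |>.congr_deriv (by ring)

lemma hasDerivAt_heronSq_snd (x y z : ℝ) :
    HasDerivAt (fun t => heronSq x t z) (y * (x ^ 2 + z ^ 2 - y ^ 2) / 4) y := by
  simpa only [heronSq_swap_fst_snd x] using hasDerivAt_heronSq_fst y x z

lemma hasDerivAt_heronSq_thd (x y z : ℝ) :
    HasDerivAt (fun t => heronSq x y t) (z * (y ^ 2 + x ^ 2 - z ^ 2) / 4) z := by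
  simpa only [heronSq_swap_fst_thd x] using hasDerivAt_heronSq_fst z y x

lemma eq_of_heronSq_partials_eq {x y z : ℝ} (hsum : 0 < x + y + z) (hz : z < x + y)
    (h : x * (y ^ 2 + z ^ 2 - x ^ 2) / 4 = y * (x ^ 2 + z ^ 2 - y ^ 2) / 4) : x = y := by
  have hfactor : (x - y) * ((x + y + z) * (x + y - z)) = 0 := by linear_combination (-4) * h
  have hpos : 0 < (x + y + z) * (x + y - z) := mul_pos hsum (by linarith)
  exact sub_eq_zero.mp ((mul_eq_zero.mp hfactor).resolve_right hpos.ne')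

theorem heron_sq_partials_equal_iff_equilateral_general
    (Φ : ℝ × ℝ × ℝ → ℝ)
    (hΦ : ∀ v : ℝ × ℝ × ℝ, Φ v =
      (1 / 16) * ((v.1 + v.2.1 + v.2.2) * (-v.1 + v.2.1 + v.2.2) *
        (v.1 - v.2.1 + v.2.2) * (v.1 + v.2.1 - v.2.2)))
    (x y z : ℝ)
    (h1 : x < y + z) (h2 : y < x + z) (h3 : z < x + y)
    (heq : deriv (fun t => Φ (t, y, z)) x = deriv (fun t => Φ (x, t, z)) y ∧
           deriv (fun t => Φ (x, t, z)) y = deriv (fun t => Φ (x, y, t)) z) :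
    x = y ∧ y = z := by
  have hΦ_eq : Φ = fun v => heronSq v.1 v.2.1 v.2.2 :=
    funext fun v => by rw [hΦ]; unfold heronSq; ring
  subst hΦ_eq
  obtain ⟨hxy, hyz⟩ := heq
  rw [(hasDerivAt_heronSq_fst x y z).deriv, (hasDerivAt_heronSq_snd x y z).deriv] at hxy
  rw [(hasDerivAt_heronSq_snd x y z).deriv, (hasDerivAt_heronSq_thd x y z).deriv] at hyz
  have hsum : 0 < x + y + z := by linarith
  exact ⟨eq_of_heronSq_partials_eq hsum h3 hxy,
    eq_of_heronSq_partials_eq (by linarith) h1 (by linear_combination hyz)⟩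

/-- On Ω₃, the map Ψ = (perimeter, squared Heron area) has rank-2 differential
away from equilateral triangles: the three partial derivatives of
Φ(x,y,z) = (1/16)(x+y+z)(−x+y+z)(x−y+z)(x+y−z) are all equal only if x = y = z. -/
theorem heron_sq_partials_equal_iff_equilateral
    (Φ : ℝ × ℝ × ℝ → ℝ)
    (hΦ : ∀ v : ℝ × ℝ × ℝ, Φ v =
      (1 / 16) * ((v.1 + v.2.1 + v.2.2) * (-v.1 + v.2.1 + v.2.2) *
        (v.1 - v.2.1 + v.2.2) * (v.1 + v.2.1 - v.2.2)))
    (x y z : ℝ) (hx : 0 < x) (hy : 0 < y) (hz : 0 < z)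
    (h1 : x < y + z) (h2 : y < x + z) (h3 : z < x + y)
    (heq : deriv (fun t => Φ (t, y, z)) x = deriv (fun t => Φ (x, t, z)) y ∧
           deriv (fun t => Φ (x, t, z)) y = deriv (fun t => Φ (x, y, t)) z) :
    x = y ∧ y = z :=
  heron_sq_partials_equal_iff_equilateral_general Φ hΦ x y z h1 h2 h3 heq
end

section
/- Let h(x,y,z) = (1/4)√((x+y+z)(−x+y+z)(x−y+z)(x+y−z)) on the set V of positive triples satisfying strict triangle inequalities. If (t_{k−1}, x_k, t_k) ∈ V and (t_k, x_k, t_{k+1}) ∈ V with the same second entry x_k, and ∂h/∂z(t_{k−1}, x_k, t_k) + ∂h/∂x(t_k, x_k, t_{k+1}) = 0, then (t_{k+1} − t_{k−1})(t_{k+1}t_{k−1} − x_k² + t_k²)(t_{k+1}t_{k−1} + x_k² − t_k²) = 0. -/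
/-!
Differentiating Heron's formula `16 h² = 4x²y² - (x² + y² - z²)²`, the hypothesis says
`p / √A + q / √B = 0`, where `A`, `B` are the two (positive) Heron products and
`p = t₋² + x² - t²`, `q = x² + t₊² - t²` are the law-of-cosines numerators at the shared side `t`.
Squaring and substituting `A = 4t₋²x² - p²`, `B = 4x²t₊² - q²` leaves `(p t₊)² = (q t₋)²`, and
`(q t₋)² - (p t₊)²` factors as `(t₊ - t₋)(t₊ + t₋)(t₊t₋ - x² + t²)(t₊t₋ + x² - t²)`.
-/

noncomputable section

def heronProduct (x y z : ℝ) : ℝ := (x + y + z) * (-x + y + z) * (x - y + z) * (x + y - z)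

def heronArea (x y z : ℝ) : ℝ := 1 / 4 * √(heronProduct x y z)

variable {x y z : ℝ}

theorem heronProduct_eq_sub_sq_right (x y z : ℝ) :
    heronProduct x y z = 4 * x ^ 2 * y ^ 2 - (x ^ 2 + y ^ 2 - z ^ 2) ^ 2 := by
  unfold heronProduct; ring

theorem heronProduct_eq_sub_sq_left (x y z : ℝ) :
    heronProduct x y z = 4 * y ^ 2 * z ^ 2 - (y ^ 2 + z ^ 2 - x ^ 2) ^ 2 := by
  unfold heronProduct; ring

theorem heronProduct_pos (hx : x < y + z) (hy : y < x + z) (hz : z < x + y) :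
    0 < heronProduct x y z := by
  refine (mul_pos (mul_pos (mul_pos (by linarith : 0 < x + y + z) (sub_pos.2 hx))
    (sub_pos.2 hy)) (sub_pos.2 hz)).trans_eq ?_
  unfold heronProduct; ring

theorem hasDerivAt_heronProduct_right (x y z : ℝ) :
    HasDerivAt (fun z => heronProduct x y z) (4 * z * (x ^ 2 + y ^ 2 - z ^ 2)) z := by
  simp only [heronProduct_eq_sub_sq_right]
  exact ((((hasDerivAt_id' z).fun_pow 2).const_sub (x ^ 2 + y ^ 2)).fun_pow 2).const_sub
    (4 * x ^ 2 * y ^ 2) |>.congr_deriv (by ring)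

theorem hasDerivAt_heronProduct_left (x y z : ℝ) :
    HasDerivAt (fun x => heronProduct x y z) (4 * x * (y ^ 2 + z ^ 2 - x ^ 2)) x := by
  simp only [heronProduct_eq_sub_sq_left]
  exact ((((hasDerivAt_id' x).fun_pow 2).const_sub (y ^ 2 + z ^ 2)).fun_pow 2).const_sub
    (4 * y ^ 2 * z ^ 2) |>.congr_deriv (by ring)

theorem hasDerivAt_heronArea_right (hpos : 0 < heronProduct x y z) :
    HasDerivAt (fun z => heronArea x y z)
      (z * (x ^ 2 + y ^ 2 - z ^ 2) / (2 * √(heronProduct x y z))) z := by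
  exact ((hasDerivAt_heronProduct_right x y z).sqrt hpos.ne').const_mul (1 / 4)
    |>.congr_deriv (by ring)

theorem hasDerivAt_heronArea_left (hpos : 0 < heronProduct x y z) :
    HasDerivAt (fun x => heronArea x y z)
      (x * (y ^ 2 + z ^ 2 - x ^ 2) / (2 * √(heronProduct x y z))) x := by
  exact ((hasDerivAt_heronProduct_left x y z).sqrt hpos.ne').const_mul (1 / 4)
    |>.congr_deriv (by ring)

theorem sq_mul_eq_sq_mul_of_div_sqrt_add_div_sqrt_eq_zero {a b A B : ℝ} (hA : 0 < A) (hB : 0 < B)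
    (h : a / √A + b / √B = 0) : a ^ 2 * B = b ^ 2 * A := by
  have hsq := congrArg (· ^ 2) (eq_neg_of_add_eq_zero_left h)
  simp only [div_pow, neg_sq, Real.sq_sqrt hA.le, Real.sq_sqrt hB.le] at hsq
  field_simp at hsq
  linarith

end

/-- If h(x,y,z) = (1/4)√((x+y+z)(−x+y+z)(x−y+z)(x+y−z)), the triples
(t_{k−1}, x_k, t_k) and (t_k, x_k, t_{k+1}) both lie in the set V of positive
triples satisfying the strict triangle inequalities, and
∂h/∂z(t_{k−1}, x_k, t_k) + ∂h/∂x(t_k, x_k, t_{k+1}) = 0, then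
(t_{k+1} − t_{k−1})(t_{k+1}t_{k−1} − x_k² + t_k²)(t_{k+1}t_{k−1} + x_k² − t_k²) = 0. -/
theorem area_partials_cancel_factorization
    (h : ℝ → ℝ → ℝ → ℝ)
    (hh : ∀ x y z, h x y z =
      (1 / 4) * Real.sqrt ((x + y + z) * (-x + y + z) * (x - y + z) * (x + y - z)))
    (tm xk tk tp : ℝ)
    (htm : 0 < tm) (hxk : 0 < xk) (htk : 0 < tk) (htp : 0 < tp)
    (h1 : tm < xk + tk) (h2 : xk < tm + tk) (h3 : tk < tm + xk)
    (h4 : tk < xk + tp) (h5 : xk < tk + tp) (h6 : tp < tk + xk)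
    (hzero : deriv (fun u => h tm xk u) tk + deriv (fun u => h u xk tp) tk = 0) :
    (tp - tm) * (tp * tm - xk ^ 2 + tk ^ 2) * (tp * tm + xk ^ 2 - tk ^ 2) = 0 := by
  obtain rfl : h = heronArea := funext₃ hh
  have hA := heronProduct_pos h1 h2 h3
  have hB := heronProduct_pos h4 h5 h6
  rw [(hasDerivAt_heronArea_right hA).deriv, (hasDerivAt_heronArea_left hB).deriv] at hzero
  set p := tm ^ 2 + xk ^ 2 - tk ^ 2
  set q := xk ^ 2 + tp ^ 2 - tk ^ 2
  have hsum : p / √(heronProduct tm xk tk) + q / √(heronProduct tk xk tp) = 0 := by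
    have : tk / 2 * (p / √(heronProduct tm xk tk) + q / √(heronProduct tk xk tp)) = 0 := by
      rw [← hzero]; ring
    exact (mul_eq_zero.mp this).resolve_left (by positivity)
  have hsq : xk ^ 2 * (p * tp) ^ 2 = xk ^ 2 * (q * tm) ^ 2 := by
    have := sq_mul_eq_sq_mul_of_div_sqrt_add_div_sqrt_eq_zero hA hB hsum
    unfold heronProduct at this
    linear_combination this / 4
  have hfac :
      (tp - tm) * (tp * tm - xk ^ 2 + tk ^ 2) * (tp * tm + xk ^ 2 - tk ^ 2) * (tp + tm) = 0 := by
    linear_combination -mul_left_cancel₀ (by positivity) hsq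
  exact (mul_eq_zero.mp hfac).resolve_right (by positivity)
end
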